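/- arXiv:2410.15000 — 6 statements merged into one kernel-verified Lean document; each statement's English description precedes it below -/
import Mathlib

section
/- Let G be a finite simple connected graph of order n and diameter d that is not a complete graph, and let u ≠ v be two vertices of G with N_G[u] = N_G[v]. Then the graph G − v obtained by deleting v is connected with diameter d, and m_G(−1) = n − d − 1 holds if and only if m_{G−v}(−1) = (n − 1) − d − 1 holds. -/
attribute [local instance] Classical.propDecidable

/-- The multiplicity of `-1` as an eigenvalue of the adjacency matrix of `G`,
i.e. the dimension over `ℝ` of the kernel of `A + I`. -/
noncomputable def multNegOne {V : Type*} [Fintype V] (G : SimpleGraph V) : ℕ :=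
  Module.finrank ℝ (LinearMap.ker (Matrix.toLin' (G.adjMatrix ℝ + 1)))

/-!
Sending `w` to its twin `u` retracts `G` onto `G - w` and maps every edge to an edge or to a
single vertex, because `u` and `w` have the same closed neighbourhood. Walks of `G` therefore
project to walks of `G - w` that are no longer, so `G - w` is connected and distance-preserving.
Since `d(u, ·) = d(w, ·)` off `{u, w}` and `d ≥ 2`, it keeps the diameter `d`, and a geodesic
of length `d` in `G - w` gives `n - 1 ≥ d + 1`. The matrix `A + I` of `G` is that of `G - w`
with the row and column of `u` duplicated, so both have the same rank and the nullity, which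
is `m(-1)`, drops by exactly one.
-/

open Relation

namespace Matrix

variable {K : Type*} [Field K] {m n : Type*} [Fintype n]

theorem finrank_ker_toLin'_add_rank [DecidableEq n] (A : Matrix m n K) :
    Module.finrank K (LinearMap.ker (toLin' A)) + A.rank = Fintype.card n := by
  rw [rank, ← toLin'_apply', add_comm, LinearMap.finrank_range_add_finrank_ker,
    Module.finrank_fintype_fun_eq_card]

theorem rank_eq_of_eq_submatrix_of_eq_submatrix [Fintype m] {A : Matrix m m K} {B : Matrix n n K}
    (f : m → n) (g : n → m) (hA : A = B.submatrix f f) (hB : B = A.submatrix g g) :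
    A.rank = B.rank :=
  le_antisymm (hA ▸ rank_submatrix_le B f f) (hB ▸ rank_submatrix_le A g g)

end Matrix

namespace SimpleGraph

variable {V W : Type*}

theorem reflGen_adj_comm (G : SimpleGraph V) {a b : V} :
    ReflGen G.Adj a b ↔ ReflGen G.Adj b a := by
  simp only [reflGen_iff, eq_comm, G.adj_comm]

theorem reflGen_induce_adj_iff (G : SimpleGraph V) {s : Set V} {a b : s} :
    ReflGen (G.induce s).Adj a b ↔ ReflGen G.Adj a b := by
  simp only [reflGen_iff, Subtype.ext_iff, comap_adj, Function.Embedding.subtype_apply]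

theorem adjMatrix_add_one_apply {α : Type*} [AddMonoidWithOne α] [DecidableEq V]
    (G : SimpleGraph V) [DecidableRel G.Adj] (a b : V) :
    (G.adjMatrix α + 1) a b = if ReflGen G.Adj a b then 1 else 0 := by
  by_cases hab : a = b
  · subst hab; simp [ReflGen.refl]
  · simp [reflGen_iff, hab, Ne.symm hab]

theorem adjMatrix_add_one_eq_submatrix {α : Type*} [AddMonoidWithOne α] [DecidableEq V]
    [DecidableEq W] (G : SimpleGraph V) (H : SimpleGraph W) [DecidableRel G.Adj]
    [DecidableRel H.Adj] (f : V → W)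
    (hf : ∀ a b, ReflGen G.Adj a b ↔ ReflGen H.Adj (f a) (f b)) :
    G.adjMatrix α + 1 = (H.adjMatrix α + 1).submatrix f f := by
  ext a b
  rw [Matrix.submatrix_apply, adjMatrix_add_one_apply, adjMatrix_add_one_apply,
    if_congr (hf a b) rfl rfl]

theorem dist_le_dist_induce {G : SimpleGraph V} {s : Set V} {a b : s}
    (h : (G.induce s).Reachable a b) : G.dist a b ≤ (G.induce s).dist a b := by
  obtain ⟨p, hp⟩ := h.exists_walk_length_eq_dist
  calc G.dist a b ≤ (p.map (Embedding.induce s).toHom).length := dist_le _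
    _ = (G.induce s).dist a b := by rw [Walk.length_map, hp]

theorem dist_lt_card [Fintype V] (G : SimpleGraph V) (a b : V) : G.dist a b < Fintype.card V := by
  by_cases h : G.Reachable a b
  · obtain ⟨p, hp, hlen⟩ := h.exists_path_of_dist
    exact hlen ▸ hp.length_lt
  · rw [dist_eq_zero_of_not_reachable h]
    exact Fintype.card_pos_iff.mpr ⟨a⟩

theorem multNegOne_add_rank [Fintype V] [DecidableEq V] (G : SimpleGraph V) [DecidableRel G.Adj] :
    multNegOne G + (G.adjMatrix ℝ + 1).rank = Fintype.card V := by
  -- `multNegOne` is elaborated with the classical instances.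
  obtain rfl : ‹DecidableEq V› = fun a b => Classical.propDecidable (a = b) :=
    Subsingleton.elim _ _
  obtain rfl : ‹DecidableRel G.Adj› = fun a b => Classical.propDecidable (G.Adj a b) :=
    Subsingleton.elim _ _
  exact Matrix.finrank_ker_toLin'_add_rank _

section Twin

variable {G : SimpleGraph V} {u w : V}

noncomputable def twinRetract (huw : u ≠ w) (x : V) : {x : V | x ≠ w} :=
  if h : x = w then ⟨u, huw⟩ else ⟨x, h⟩

theorem twinRetract_of_ne (huw : u ≠ w) {x : V} (hx : x ≠ w) :
    twinRetract huw x = ⟨x, hx⟩ :=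
  dif_neg hx

@[simp]
theorem twinRetract_coe (huw : u ≠ w) (x : {x : V | x ≠ w}) : twinRetract huw x = x :=
  twinRetract_of_ne huw x.2

theorem twinRetract_self (huw : u ≠ w) : twinRetract huw w = ⟨u, huw⟩ :=
  dif_pos rfl

variable (huw : u ≠ w) (htwin : ∀ z, ReflGen G.Adj u z ↔ ReflGen G.Adj w z)
include huw htwin

theorem adj_of_twin : G.Adj u w := by
  simpa [reflGen_iff, huw.symm] using (htwin w).mpr .refl

theorem reflGen_adj_twinRetract_left (a z : V) :
    ReflGen G.Adj (twinRetract huw a) z ↔ ReflGen G.Adj a z := by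
  by_cases ha : a = w
  · subst ha; rw [twinRetract_self]; exact htwin z
  · rw [twinRetract_of_ne huw ha]

theorem reflGen_induce_adj_twinRetract (a b : V) :
    ReflGen (G.induce {x | x ≠ w}).Adj (twinRetract huw a) (twinRetract huw b) ↔
      ReflGen G.Adj a b := by
  rw [reflGen_induce_adj_iff, reflGen_adj_twinRetract_left huw htwin, G.reflGen_adj_comm,
    reflGen_adj_twinRetract_left huw htwin, G.reflGen_adj_comm]

theorem exists_walk_induce_twinRetract {a b : V} (p : G.Walk a b) :
    ∃ q : (G.induce {x | x ≠ w}).Walk (twinRetract huw a) (twinRetract huw b),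
      q.length ≤ p.length := by
  induction p with
  | nil => exact ⟨.nil, le_rfl⟩
  | cons hadj p ih =>
    obtain ⟨q, hq⟩ := ih
    rcases (reflGen_iff _ _ _).mp
      ((reflGen_induce_adj_twinRetract huw htwin _ _).mpr (.single hadj)) with heq | hadj'
    · exact ⟨q.copy heq rfl, by simp only [Walk.length_copy, Walk.length_cons]; omega⟩
    · exact ⟨.cons hadj' q, by simp only [Walk.length_cons]; omega⟩

theorem dist_induce_twinRetract_le (hconn : G.Connected) (a b : V) :
    (G.induce {x | x ≠ w}).dist (twinRetract huw a) (twinRetract huw b) ≤ G.dist a b := by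
  obtain ⟨p, hp⟩ := hconn.exists_walk_length_eq_dist a b
  obtain ⟨q, hq⟩ := exists_walk_induce_twinRetract huw htwin p
  exact (dist_le q).trans (hp ▸ hq)

theorem induce_connected_of_twin (hconn : G.Connected) : (G.induce {x | x ≠ w}).Connected := by
  refine (connected_iff _).mpr ⟨fun x y => ?_, ⟨⟨u, huw⟩⟩⟩
  obtain ⟨q, -⟩ := exists_walk_induce_twinRetract huw htwin (hconn.preconnected x y).some
  simpa using q.reachable

theorem dist_induce_of_twin (hconn : G.Connected) (x y : {x : V | x ≠ w}) :
    (G.induce {x | x ≠ w}).dist x y = G.dist x y :=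
  le_antisymm (by simpa using dist_induce_twinRetract_le huw htwin hconn x y)
    (dist_le_dist_induce ((induce_connected_of_twin huw htwin hconn).preconnected x y))

theorem dist_le_dist_of_twin (hconn : G.Connected) {b : V} (hb : b ≠ w) :
    G.dist u b ≤ G.dist w b := by
  simpa [twinRetract_self, twinRetract_of_ne huw hb, dist_induce_of_twin huw htwin hconn]
    using dist_induce_twinRetract_le huw htwin hconn w b

theorem dist_eq_dist_of_twin (hconn : G.Connected) {b : V} (hbu : b ≠ u) (hbw : b ≠ w) :
    G.dist u b = G.dist w b :=
  le_antisymm (dist_le_dist_of_twin huw htwin hconn hbw)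
    (dist_le_dist_of_twin huw.symm (fun z => (htwin z).symm) hconn hbu)

theorem exists_dist_induce_eq_of_twin (hconn : G.Connected) {a b : V} (hab : 2 ≤ G.dist a b) :
    ∃ x y : {x : V | x ≠ w}, (G.induce {x | x ≠ w}).dist x y = G.dist a b := by
  wlog hb : b ≠ w generalizing a b
  · have ha : a ≠ w := by
      rintro rfl
      simp [not_not.mp hb] at hab
    obtain ⟨x, y, hxy⟩ := this (dist_comm (G := G) ▸ hab) ha
    exact ⟨y, x, by rw [dist_comm, hxy, dist_comm]⟩
  by_cases ha : a = w
  · subst ha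
    have hbu : b ≠ u := by
      rintro rfl
      rw [dist_comm, dist_eq_one_iff_adj.mpr (adj_of_twin huw htwin)] at hab
      omega
    refine ⟨⟨u, huw⟩, ⟨b, hb⟩, ?_⟩
    rw [dist_induce_of_twin huw htwin hconn, dist_eq_dist_of_twin huw htwin hconn hbu hb]
  · exact ⟨⟨a, ha⟩, ⟨b, hb⟩, dist_induce_of_twin huw htwin hconn _ _⟩

theorem multNegOne_eq_multNegOne_induce_add_one [Fintype V] :
    multNegOne G = multNegOne (G.induce {x | x ≠ w}) + 1 := by
  have hrank : (G.adjMatrix ℝ + 1).rank = ((G.induce {x | x ≠ w}).adjMatrix ℝ + 1).rank :=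
    Matrix.rank_eq_of_eq_submatrix_of_eq_submatrix (twinRetract huw) Subtype.val
      (adjMatrix_add_one_eq_submatrix _ _ _
        fun a b => (reflGen_induce_adj_twinRetract huw htwin a b).symm)
      (adjMatrix_add_one_eq_submatrix _ _ _ fun _ _ => G.reflGen_induce_adj_iff)
  have hV := G.multNegOne_add_rank
  have hS := (G.induce {x | x ≠ w}).multNegOne_add_rank
  have hcard : Fintype.card {x : V | x ≠ w} = Fintype.card V - 1 := Set.card_ne_eq w
  have hpos : 0 < Fintype.card V := Fintype.card_pos_iff.mpr ⟨w⟩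
  omega

end Twin

end SimpleGraph

open SimpleGraph

theorem stmt_1 {V : Type*} [Fintype V] (G : SimpleGraph V) (n d : ℕ)
    (hconn : G.Connected)
    (hcard : Fintype.card V = n)
    (hdiam_le : ∀ a b : V, G.dist a b ≤ d)
    (hdiam_ex : ∃ a b : V, G.dist a b = d)
    (hnotcomplete : ∃ a b : V, a ≠ b ∧ ¬ G.Adj a b)
    (u w : V) (huw : u ≠ w)
    (hN : ∀ z : V, (z = u ∨ G.Adj u z) ↔ (z = w ∨ G.Adj w z)) :
    (G.induce {x : V | x ≠ w}).Connected ∧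
    (∀ a b : {x : V | x ≠ w}, (G.induce {x : V | x ≠ w}).dist a b ≤ d) ∧
    (∃ a b : {x : V | x ≠ w}, (G.induce {x : V | x ≠ w}).dist a b = d) ∧
    (multNegOne G = n - d - 1 ↔ multNegOne (G.induce {x : V | x ≠ w}) = (n - 1) - d - 1) := by
  have htwin : ∀ z, ReflGen G.Adj u z ↔ ReflGen G.Adj w z := by
    simpa only [reflGen_iff] using hN
  obtain ⟨a, b, hab, hnadj⟩ := hnotcomplete
  obtain ⟨a', b', rfl⟩ := hdiam_ex
  have htwo : 2 ≤ G.dist a' b' :=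
    (hconn.one_lt_dist_of_ne_of_not_adj hab hnadj).trans_le (hdiam_le a b)
  obtain ⟨x, y, hxy⟩ := exists_dist_induce_eq_of_twin huw htwin hconn htwo
  have hdn : G.dist a' b' + 2 ≤ n := by
    have := (G.induce {x | x ≠ w}).dist_lt_card x y
    rw [Set.card_ne_eq] at this
    omega
  refine ⟨induce_connected_of_twin huw htwin hconn,
    fun x y => (dist_induce_of_twin huw htwin hconn x y).trans_le (hdiam_le _ _),
    ⟨x, y, hxy⟩, ?_⟩
  rw [multNegOne_eq_multNegOne_induce_add_one huw htwin]
  omega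
end

section
/- Let G be a finite simple connected graph of order n and diameter d with m_G(−1) = n − d − 1, let P be a diameter path of G (an induced path on d + 1 vertices realizing the diameter), and let H be an induced subgraph of G with V(P) ⊆ V(H). Then rank(A(H) + I) ≥ rank(A(G) + I) − 1, where A(·) denotes the adjacency matrix over ℝ and I the identity matrix. -/
/-!
Since `rank (A + I) + m(-1) = n`, the hypothesis on `m(-1)` gives `rank (A(G) + I) ≤ d + 1`.
On the other hand, with rows indexed by `v₁, …, v_d` and columns by `v₂, …, v_{d+1}`, the
corresponding square submatrix of `A(H) + I` is lower triangular with ones on the diagonal,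
because the diameter path is induced; hence `rank (A(H) + I) ≥ d`.
-/

attribute [local instance] Classical.propDecidable

theorem Matrix.card_le_rank_of_isUnit_submatrix {m n k R : Type*} [Fintype n] [Fintype k]
    [DecidableEq k] [CommRing R] [StrongRankCondition R] (A : Matrix m n R) (r : k → m)
    (c : k → n) (h : IsUnit (A.submatrix r c)) : Fintype.card k ≤ A.rank :=
  (Matrix.rank_of_isUnit _ h).symm.trans_le (A.rank_submatrix_le r c)

namespace SimpleGraph

variable {V : Type*} [Fintype V]

theorem rank_adjMatrix_add_one_add_multNegOne (G : SimpleGraph V) :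
    (G.adjMatrix ℝ + 1).rank + multNegOne G = Fintype.card V := by
  rw [Matrix.rank, multNegOne, Matrix.toLin'_apply', LinearMap.finrank_range_add_finrank_ker,
    Module.finrank_fintype_fun_eq_card]

variable [DecidableEq V]

theorem le_rank_adjMatrix_add_one_of_induced_path (G : SimpleGraph V) [DecidableRel G.Adj]
    {k : ℕ} (u : Fin (k + 1) → V) (hu : Function.Injective u)
    (hadj : ∀ i j, i < j → (G.Adj (u i) (u j) ↔ (i : ℕ) + 1 = j)) :
    k ≤ (G.adjMatrix ℝ + 1).rank := by
  set M := (G.adjMatrix ℝ + 1).submatrix (u ∘ Fin.castSucc) (u ∘ Fin.succ)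
  have hlower : M.IsLowerTriangular := by
    intro i j (hij : i < j)
    have hgap : (i.castSucc : ℕ) + 1 < j.succ := by
      simp only [Fin.val_castSucc, Fin.val_succ]
      omega
    have hlt : i.castSucc < j.succ := Fin.lt_def.mpr (by omega)
    have hne : u i.castSucc ≠ u j.succ := hu.ne hlt.ne
    have hnadj : ¬ G.Adj (u i.castSucc) (u j.succ) := by
      rw [hadj _ _ hlt]
      exact hgap.ne
    simp [M, hne, hnadj]
  have hdiag : ∀ i, M i i = 1 := by
    intro i
    have hne : u i.castSucc ≠ u i.succ := hu.ne (Fin.castSucc_lt_succ (i := i)).ne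
    have hadj' : G.Adj (u i.castSucc) (u i.succ) := by
      rw [hadj _ _ (Fin.castSucc_lt_succ (i := i))]
      simp
    simp [M, hne, hadj']
  have hdet : M.det = 1 := by
    simp [Matrix.det_of_isLowerTriangular M hlower, hdiag]
  simpa using Matrix.card_le_rank_of_isUnit_submatrix _ _ _
    ((Matrix.isUnit_iff_isUnit_det M).mpr (hdet ▸ isUnit_one))

theorem le_rank_induce_adjMatrix_add_one_of_geodesic (G : SimpleGraph V) (s : Set V)
    {k : ℕ} (u : Fin (k + 1) → s) (hu : ∀ i j, i ≤ j → G.dist (u i) (u j) = j - i) :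
    k ≤ ((G.induce s).adjMatrix ℝ + 1).rank := by
  refine (G.induce s).le_rank_adjMatrix_add_one_of_induced_path u ?_ fun i j hij => ?_
  · intro i j hij
    wlog hle : i ≤ j generalizing i j
    · exact (this hij.symm (le_of_not_ge hle)).symm
    have := hu i j hle
    rw [hij, dist_self] at this
    exact Fin.ext (by omega)
  · rw [induce_adj, ← dist_eq_one_iff_adj, hu i j hij.le]
    have : (i : ℕ) < j := hij
    omega

end SimpleGraph

theorem stmt_2_general {V : Type*} [Fintype V] (G : SimpleGraph V) (n d : ℕ)
    (hcard : Fintype.card V = n)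
    (v : ℕ → V)
    (hpath : ∀ i ∈ Finset.Icc 1 (d + 1), ∀ j ∈ Finset.Icc 1 (d + 1),
      G.dist (v i) (v j) = max i j - min i j)
    (hmult : multNegOne G = n - d - 1)
    (s : Set V) (hs : ∀ i ∈ Finset.Icc 1 (d + 1), v i ∈ s) :
    Matrix.rank (G.adjMatrix ℝ + 1) - 1 ≤ Matrix.rank ((G.induce s).adjMatrix ℝ + 1) := by
  have hrank := G.rank_adjMatrix_add_one_add_multNegOne
  have hIcc (i : Fin (d + 1)) : (i : ℕ) + 1 ∈ Finset.Icc 1 (d + 1) := by simp only [Finset.mem_Icc]; omega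
  have hH := G.le_rank_induce_adjMatrix_add_one_of_geodesic s
    (fun i => ⟨v (i + 1), hs _ (hIcc i)⟩) fun i j hij => by
      simpa [Fin.le_def.mp hij] using hpath _ (hIcc i) _ (hIcc j)
  omega

theorem stmt_2 {V : Type*} [Fintype V] (G : SimpleGraph V) (n d : ℕ)
    (hconn : G.Connected)
    (hcard : Fintype.card V = n)
    (hdiam : ∀ a b : V, G.dist a b ≤ d)
    (v : ℕ → V)
    (hpath : ∀ i ∈ Finset.Icc 1 (d + 1), ∀ j ∈ Finset.Icc 1 (d + 1),
      G.dist (v i) (v j) = max i j - min i j)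
    (hmult : multNegOne G = n - d - 1)
    (s : Set V) (hs : ∀ i ∈ Finset.Icc 1 (d + 1), v i ∈ s) :
    Matrix.rank (G.adjMatrix ℝ + 1) - 1 ≤ Matrix.rank ((G.induce s).adjMatrix ℝ + 1) :=
  stmt_2_general G n d hcard v hpath hmult s hs
end

section
/- Let G be a finite simple connected C-canonical graph of order n and diameter d with d not congruent to 1 modulo 3 and m_G(−1) = n − d − 1, and let P = v_1 v_2 ⋯ v_{d+1} be a diameter path of G. Then every vertex of G not on P has exactly one or exactly two neighbors among the vertices of P. -/
attribute [local instance] Classical.propDecidable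

/-- The set of indices `i ∈ {1, …, d+1}` such that `x` is adjacent to the vertex `v i`
of the diameter path `v 1, v 2, …, v (d+1)`. -/
noncomputable def pathNbrs {V : Type*} (G : SimpleGraph V) (d : ℕ) (v : ℕ → V) (x : V) :
    Finset ℕ :=
  (Finset.Icc 1 (d + 1)).filter fun i => G.Adj x (v i)


/-!
Let `A` be the adjacency matrix plus the identity, so `rank A = n - m(-1) = d + 1`. The principal
submatrix of `A` on the diameter path is `adjMatrix (pathGraph (d + 1)) + 1`, which is invertible
when `d + 1 ≢ 2 (mod 3)`: a kernel vector, padded by zeros, satisfies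
`w k + w (k + 1) + w (k + 2) = 0`, so it is 3-periodic, and the zero at the far end kills it.
Hence the path columns span the column space of `A`, and every column of `A` is determined by its
entries in the path rows. A vertex `x` off the path without neighbours on it would have a column
vanishing on those rows although `A x x = 1`; one with three neighbours `v (i - 1), v i, v (i + 1)`
would have the column, i.e. the closed neighbourhood, of `v i`. As the path is geodesic, the
neighbours of `x` on it lie within a window of three consecutive vertices.
-/

open Finset Matrix SimpleGraph

theorem eq_zero_of_add_add_eq_zero {R : Type*} [AddCommGroup R] {m : ℕ} (hm : m % 3 ≠ 2)
    {W : ℕ → R} (h0 : W 0 = 0) (hend : W (m + 1) = 0)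
    (hrec : ∀ k < m, W k + W (k + 1) + W (k + 2) = 0) : ∀ k ≤ m + 1, W k = 0 := by
  have hshift : ∀ k, k + 3 ≤ m + 1 → W (k + 3) = W k := by
    intro k hk
    calc W (k + 3) = (W (k + 1) + W (k + 1 + 1) + W (k + 1 + 2))
          - (W k + W (k + 1) + W (k + 2)) + W k := by abel
      _ = W k := by rw [hrec k (by omega), hrec (k + 1) (by omega)]; abel
  have hperiod : ∀ k ≤ m + 1, W k = W (k % 3) := by
    intro k
    induction k using Nat.strong_induction_on with
    | _ k ih =>
      intro hk
      rcases lt_or_ge k 3 with hk3 | hk3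
      · rw [Nat.mod_eq_of_lt hk3]
      · obtain ⟨j, rfl⟩ : ∃ j, k = j + 3 := ⟨k - 3, by omega⟩
        rw [hshift j hk, ih j (by omega) (by omega), Nat.add_mod_right]
  intro k hk
  rcases Nat.eq_zero_or_pos m with rfl | hpos
  · interval_cases k <;> assumption
  have h12 : W 1 + W 2 = 0 := by simpa [h0] using hrec 0 hpos
  have hlast : W ((m + 1) % 3) = 0 := by rw [← hperiod _ le_rfl, hend]
  have h1 : W 1 = 0 := by
    rcases (by omega : (m + 1) % 3 = 1 ∨ (m + 1) % 3 = 2) with h | h <;> rw [h] at hlast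
    · exact hlast
    · rwa [hlast, add_zero] at h12
  have h2 : W 2 = 0 := by rwa [h1, zero_add] at h12
  rw [hperiod k hk]
  rcases (by omega : k % 3 = 0 ∨ k % 3 = 1 ∨ k % 3 = 2) with h | h | h <;> rw [h] <;> assumption

namespace SimpleGraph

theorem pathGraph_adjMatrix_add_one_apply {R : Type*} [AddMonoidWithOne R] {m : ℕ}
    (k l : Fin m) :
    ((pathGraph m).adjMatrix R + 1) k l = (if (l : ℕ) + 1 = k then 1 else 0)
      + (if (l : ℕ) + 1 = k + 1 then 1 else 0) + (if (l : ℕ) + 1 = k + 2 then 1 else 0) := by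
  simp only [Matrix.add_apply, adjMatrix_apply, pathGraph_adj, one_apply, Fin.ext_iff]
  split_ifs <;> first | omega | simp

theorem ker_mulVecLin_pathGraph_adjMatrix_add_one {R : Type*} [CommRing R] {m : ℕ}
    (hm : m % 3 ≠ 2) : LinearMap.ker ((pathGraph m).adjMatrix R + 1).mulVecLin = ⊥ := by
  rw [ker_mulVecLin_eq_bot_iff]
  intro w hw
  -- `w` padded by zeros at positions `0` and `m + 1`
  set W : ℕ → R := fun t => ∑ l : Fin m, if (l : ℕ) + 1 = t then w l else 0 with hW
  have hWsucc : ∀ l : Fin m, W (l + 1) = w l := by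
    intro l
    simp [hW, Fin.val_inj]
  have hrow : ∀ k : Fin m,
      (((pathGraph m).adjMatrix R + 1) *ᵥ w) k = W k + W (k + 1) + W (k + 2) := by
    intro k
    simp only [mulVec, dotProduct, pathGraph_adjMatrix_add_one_apply, add_mul, ite_mul, one_mul,
      zero_mul, sum_add_distrib, hW]
  have hzero := eq_zero_of_add_add_eq_zero hm (W := W) (by simp [hW])
    (sum_eq_zero fun l _ => if_neg (by omega))
    (fun k hk => by simpa [hrow] using congrFun hw ⟨k, hk⟩)
  funext l
  rw [← hWsucc l]
  exact hzero _ (by omega)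

end SimpleGraph

theorem Matrix.eq_zero_of_mem_range_of_comp_eq_zero {K m n ι : Type*} [Field K] [Fintype n]
    [Fintype ι] {A : Matrix m n K} {p : ι → m} {q : ι → n}
    (hT : LinearMap.ker (A.submatrix p q).mulVecLin = ⊥) (hrank : A.rank ≤ Fintype.card ι)
    {u : m → K} (hu : u ∈ LinearMap.range A.mulVecLin) (hup : u ∘ p = 0) : u = 0 := by
  set B := A.submatrix id q
  have hle : LinearMap.range B.mulVecLin ≤ LinearMap.range A.mulVecLin := by
    have hB : B = A * (1 : Matrix n n K).submatrix id q := by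
      simpa using (mul_submatrix_one (Equiv.refl n) q A).symm
    rw [hB, mulVecLin_mul]
    exact LinearMap.range_comp_le_range _ _
  rw [ker_mulVecLin_eq_bot_iff] at hT
  have hBinj : Function.Injective B.mulVecLin := by
    rw [← LinearMap.ker_eq_bot, ker_mulVecLin_eq_bot_iff]
    exact fun c hc => hT c (funext fun k => congrFun hc (p k))
  -- the columns `q` span a subspace of dimension `card ι ≥ rank A`, hence all of it
  have hrange : LinearMap.range B.mulVecLin = LinearMap.range A.mulVecLin :=
    Submodule.eq_of_le_of_finrank_le hle (by
      rwa [LinearMap.finrank_range_of_inj hBinj, Module.finrank_fintype_fun_eq_card])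
  obtain ⟨c, rfl⟩ := hrange ▸ hu
  rw [hT c (funext fun k => congrFun hup k)]
  exact map_zero _

namespace SimpleGraph

variable {V : Type*} {G : SimpleGraph V}

theorem adjMatrix_add_one_apply_s5 {R : Type*} [AddMonoidWithOne R] (z x : V) :
    (G.adjMatrix R + 1) z x = if z = x ∨ G.Adj x z then 1 else 0 := by
  by_cases h : z = x
  · subst h; simp
  · simp [h, adj_comm]

theorem rank_adjMatrix_add_one [Fintype V] (G : SimpleGraph V) :
    (G.adjMatrix ℝ + 1).rank = Fintype.card V - multNegOne G := by
  have := LinearMap.finrank_range_add_finrank_ker (G.adjMatrix ℝ + 1).mulVecLin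
  rw [Module.finrank_fintype_fun_eq_card] at this
  rw [multNegOne, toLin'_apply', Matrix.rank]
  omega

theorem Embedding.submatrix_adjMatrix_add_one {W R : Type*} [AddMonoidWithOne R]
    [DecidableEq W] {H : SimpleGraph W} [DecidableRel H.Adj] (p : H ↪g G) :
    (G.adjMatrix R + 1).submatrix p p = H.adjMatrix R + 1 := by
  ext i j
  simp [Matrix.one_apply, p.injective.eq_iff]

theorem eq_zero_of_comp_path_eq_zero [Fintype V] {K : Type*} [Field K] {m : ℕ}
    (p : pathGraph m ↪g G) (hm : m % 3 ≠ 2) (hrank : (G.adjMatrix K + 1).rank ≤ m) {u : V → K}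
    (hu : u ∈ LinearMap.range (G.adjMatrix K + 1).mulVecLin) (hup : u ∘ p = 0) : u = 0 := by
  have hT := ker_mulVecLin_pathGraph_adjMatrix_add_one (R := K) hm
  rw [← p.submatrix_adjMatrix_add_one] at hT
  exact eq_zero_of_mem_range_of_comp_eq_zero hT (by rwa [Fintype.card_fin]) hu hup

theorem col_adjMatrix_add_one_mem_range [Fintype V] {K : Type*} [Field K] (x : V) :
    (fun z => (G.adjMatrix K + 1) z x) ∈ LinearMap.range (G.adjMatrix K + 1).mulVecLin :=
  ⟨Pi.single x 1, by rw [mulVecLin_apply, mulVec_single_one]; rfl⟩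

theorem exists_eq_or_adj_path [Fintype V] {K : Type*} [Field K] {m : ℕ} (p : pathGraph m ↪g G)
    (hm : m % 3 ≠ 2) (hrank : (G.adjMatrix K + 1).rank ≤ m) (x : V) :
    ∃ k, p k = x ∨ G.Adj x (p k) := by
  by_contra! h
  have hcol := eq_zero_of_comp_path_eq_zero p hm hrank (col_adjMatrix_add_one_mem_range x)
    (funext fun k => by
      rw [Function.comp_apply, adjMatrix_add_one_apply_s5, if_neg (not_or.mpr (h k)), Pi.zero_apply])
  simpa [adjMatrix_add_one_apply_s5] using congrFun hcol x

theorem closedNbhd_iff_of_path_iff [Fintype V] {K : Type*} [Field K] {m : ℕ}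
    (p : pathGraph m ↪g G) (hm : m % 3 ≠ 2) (hrank : (G.adjMatrix K + 1).rank ≤ m) {x y : V}
    (hxy : ∀ k, (p k = x ∨ G.Adj x (p k)) ↔ (p k = y ∨ G.Adj y (p k))) (z : V) :
    (z = x ∨ G.Adj x z) ↔ (z = y ∨ G.Adj y z) := by
  have hcol := eq_zero_of_comp_path_eq_zero p hm hrank
    (sub_mem (col_adjMatrix_add_one_mem_range x) (col_adjMatrix_add_one_mem_range y))
    (funext fun k => by
      simp only [Function.comp_apply, Pi.sub_apply, adjMatrix_add_one_apply_s5, hxy k, sub_self,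
        Pi.zero_apply])
  have hz := congrFun hcol z
  simp only [adjMatrix_add_one_apply_s5, Pi.sub_apply, Pi.zero_apply, sub_eq_zero] at hz
  split_ifs at hz <;> simp_all

end SimpleGraph

theorem Finset.exists_subset_Icc_of_le_add {S : Finset ℕ} {r : ℕ}
    (h : ∀ i ∈ S, ∀ j ∈ S, j ≤ i + r) : ∃ a, S ⊆ Icc a (a + r) := by
  rcases S.eq_empty_or_nonempty with rfl | hS
  · exact ⟨0, empty_subset _⟩
  · exact ⟨S.min' hS, fun j hj => mem_Icc.2 ⟨S.min'_le j hj, h _ (S.min'_mem hS) j hj⟩⟩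

section DiameterPath

variable {V : Type*} {G : SimpleGraph V} {d : ℕ} {v : ℕ → V}

theorem Fin.val_add_one_mem_Icc (k : Fin (d + 1)) : (k : ℕ) + 1 ∈ Icc 1 (d + 1) :=
  mem_Icc.2 ⟨by omega, by omega⟩

/-- Embeddings `↪g` are induced, so this says that a geodesic has no chords. -/
def geodesicEmbedding
    (hpath : ∀ i ∈ Icc 1 (d + 1), ∀ j ∈ Icc 1 (d + 1), G.dist (v i) (v j) = max i j - min i j) :
    pathGraph (d + 1) ↪g G where
  toFun k := v (k + 1)
  inj' k l hkl := by
    have h := hpath _ k.val_add_one_mem_Icc _ l.val_add_one_mem_Icc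
    rw [show v (k + 1) = v (l + 1) from hkl, dist_self] at h
    exact Fin.ext (by omega)
  map_rel_iff' {k l} := by
    show G.Adj (v (k + 1)) (v (l + 1)) ↔ _
    rw [pathGraph_adj, ← dist_eq_one_iff_adj,
      hpath _ k.val_add_one_mem_Icc _ l.val_add_one_mem_Icc]
    omega

@[simp]
theorem geodesicEmbedding_apply
    (hpath : ∀ i ∈ Icc 1 (d + 1), ∀ j ∈ Icc 1 (d + 1), G.dist (v i) (v j) = max i j - min i j)
    (k : Fin (d + 1)) : geodesicEmbedding hpath k = v (k + 1) :=
  rfl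

theorem exists_pathNbrs_subset_Icc
    (hpath : ∀ i ∈ Icc 1 (d + 1), ∀ j ∈ Icc 1 (d + 1), G.dist (v i) (v j) = max i j - min i j)
    (x : V) : ∃ a, pathNbrs G d v x ⊆ Icc a (a + 2) := by
  refine Finset.exists_subset_Icc_of_le_add fun i hi j hj => ?_
  simp only [pathNbrs, mem_filter] at hi hj
  have h2 := dist_le (.cons hi.2.symm (.cons hj.2 .nil) : G.Walk (v i) (v j))
  rw [hpath i hi.1 j hj.1] at h2
  simp only [Walk.length_cons, Walk.length_nil] at h2
  omega

theorem succ_mem_pathNbrs_iff {x : V} (k : Fin (d + 1)) :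
    (k : ℕ) + 1 ∈ pathNbrs G d v x ↔ G.Adj x (v (k + 1)) := by
  simp [pathNbrs, k.val_add_one_mem_Icc]

theorem pathNbrs_ne_Icc [Fintype V] {K : Type*} [Field K]
    (hpath : ∀ i ∈ Icc 1 (d + 1), ∀ j ∈ Icc 1 (d + 1), G.dist (v i) (v j) = max i j - min i j)
    (hm : (d + 1) % 3 ≠ 2) (hrank : (G.adjMatrix K + 1).rank ≤ d + 1)
    (hcanon : ∀ a b : V, (∀ z : V, (z = a ∨ G.Adj a z) ↔ (z = b ∨ G.Adj b z)) → a = b)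
    {x : V} (hxP : ∀ i ∈ Icc 1 (d + 1), x ≠ v i) (a : ℕ) : pathNbrs G d v x ≠ Icc a (a + 2) := by
  intro hS
  have ha : 1 ≤ a ∧ a + 2 ≤ d + 1 := by
    have h : Icc a (a + 2) ⊆ Icc 1 (d + 1) := hS ▸ filter_subset _ _
    exact ⟨(mem_Icc.1 (h (left_mem_Icc.2 (by omega)))).1,
      (mem_Icc.1 (h (right_mem_Icc.2 (by omega)))).2⟩
  set p := geodesicEmbedding hpath
  have hpx : ∀ k, p k ≠ x := fun k h => hxP _ k.val_add_one_mem_Icc h.symm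
  -- `x` and the middle vertex `v (a + 1)` have the same neighbours on the path
  refine hpx ⟨a, by omega⟩ (hcanon _ _ (closedNbhd_iff_of_path_iff p hm hrank fun l => ?_))
  rw [or_iff_right (hpx l), p.injective.eq_iff, p.map_adj_iff, geodesicEmbedding_apply,
    ← succ_mem_pathNbrs_iff, hS, mem_Icc, pathGraph_adj, Fin.ext_iff]
  dsimp only
  omega

end DiameterPath

theorem stmt_5_general {V : Type*} [Fintype V] (G : SimpleGraph V) (n d : ℕ)
    (hcard : Fintype.card V = n)
    (hcanon : ∀ a b : V, (∀ z : V, (z = a ∨ G.Adj a z) ↔ (z = b ∨ G.Adj b z)) → a = b)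
    (hd3 : d % 3 ≠ 1)
    (v : ℕ → V)
    (hpath : ∀ i ∈ Finset.Icc 1 (d + 1), ∀ j ∈ Finset.Icc 1 (d + 1),
      G.dist (v i) (v j) = max i j - min i j)
    (hmult : multNegOne G = n - d - 1)
    (x : V) (hxP : ∀ i ∈ Finset.Icc 1 (d + 1), x ≠ v i) :
    (pathNbrs G d v x).card = 1 ∨ (pathNbrs G d v x).card = 2 := by
  have hm : (d + 1) % 3 ≠ 2 := by omega
  have hrank : (G.adjMatrix ℝ + 1).rank ≤ d + 1 := by
    rw [G.rank_adjMatrix_add_one, hcard, hmult]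
    omega
  obtain ⟨a, hsub⟩ := exists_pathNbrs_subset_Icc hpath x
  have hcard_Icc : (Icc a (a + 2)).card = 3 := by rw [Nat.card_Icc]; omega
  have hle : (pathNbrs G d v x).card ≤ 3 := hcard_Icc ▸ card_le_card hsub
  have hne0 : (pathNbrs G d v x).card ≠ 0 := by
    obtain ⟨k, hk⟩ := exists_eq_or_adj_path (geodesicEmbedding hpath) hm hrank x
    refine card_ne_zero_of_mem ((succ_mem_pathNbrs_iff k).2 (hk.resolve_left fun h => ?_))
    exact hxP _ k.val_add_one_mem_Icc h.symm
  have hne3 : (pathNbrs G d v x).card ≠ 3 := fun h3 =>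
    pathNbrs_ne_Icc hpath hm hrank hcanon hxP a
      (eq_of_subset_of_card_le hsub (hcard_Icc.trans h3.symm).le)
  omega

theorem stmt_5 {V : Type*} [Fintype V] (G : SimpleGraph V) (n d : ℕ)
    (hconn : G.Connected)
    (hcard : Fintype.card V = n)
    (hcanon : ∀ a b : V, (∀ z : V, (z = a ∨ G.Adj a z) ↔ (z = b ∨ G.Adj b z)) → a = b)
    (hd3 : d % 3 ≠ 1)
    (hdiam : ∀ a b : V, G.dist a b ≤ d)
    (v : ℕ → V)
    (hpath : ∀ i ∈ Finset.Icc 1 (d + 1), ∀ j ∈ Finset.Icc 1 (d + 1),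
      G.dist (v i) (v j) = max i j - min i j)
    (hmult : multNegOne G = n - d - 1)
    (x : V) (hxP : ∀ i ∈ Finset.Icc 1 (d + 1), x ≠ v i) :
    (pathNbrs G d v x).card = 1 ∨ (pathNbrs G d v x).card = 2 :=
  stmt_5_general G n d hcard hcanon hd3 v hpath hmult x hxP
end

section
/- Let G be a finite simple connected C-canonical graph of order n and diameter d with d not congruent to 1 modulo 3 and m_G(−1) = n − d − 1, and let P = v_1 v_2 ⋯ v_{d+1} be a diameter path of G. If a vertex u of G not on P is adjacent to exactly the two vertices v_i and v_j of P with i < j, then j = i + 1. -/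
attribute [local instance] Classical.propDecidable

/-!
Let `M = A + I`. If `u` sees exactly `v i` and `v (i + 2)` on the path, then no nonzero vector
of `ker M` is supported on the `d + 2` vertices `v 1, …, v (d + 1), u`. Away from the rows `i`,
`i + 2` and `u`, a kernel vector restricted to the path satisfies `c (k-1) + c k + c (k+1) = 0`,
so from either end it is a multiple of the `3`-periodic sequence `0, 1, -1`; the four remaining
rows then force it to vanish unless `d ≡ 1 (mod 3)`. A subspace of dimension `d + 2` meeting
`ker M` trivially gives `m_G(-1) ≤ n - d - 2`. Finally `j ≤ i + 2` because `v i, u, v j` is a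
walk.
-/

open Finset Matrix

theorem Matrix.card_add_finrank_ker_le {K V : Type*} [Field K] [Fintype V] (M : Matrix V V K)
    (s : Finset V) (h : ∀ x, M *ᵥ x = 0 → (∀ a ∉ s, x a = 0) → x = 0) :
    #s + Module.finrank K (LinearMap.ker M.toLin') ≤ Fintype.card V := by
  let U : Submodule K (V → K) := ⨅ a ∈ (↑s : Set V)ᶜ, LinearMap.ker (LinearMap.proj a)
  have hU : Module.finrank K U = #s := by
    rw [(LinearMap.iInfKerProjEquiv K (fun _ : V => K) disjoint_compl_right
      (by simp)).finrank_eq]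
    simp
  have hdisj : Disjoint U (LinearMap.ker M.toLin') := by
    rw [Submodule.disjoint_def]
    intro x hxU hxM
    simp only [U, Submodule.mem_iInf, LinearMap.mem_ker, LinearMap.proj_apply] at hxU
    exact h x (by simpa using hxM) (fun a ha => hxU a (by simpa using ha))
  simpa [hU] using Submodule.finrank_add_finrank_le_of_disjoint hdisj

theorem Matrix.mulVec_apply_of_support_subset {R V : Type*} [NonUnitalNonAssocSemiring R]
    [Fintype V] (M : Matrix V V R) {x : V → R} {s : Finset V} (hx : ∀ a ∉ s, x a = 0)
    (z : V) :
    (M *ᵥ x) z = ∑ a ∈ s, M z a * x a :=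
  (sum_subset (subset_univ s) fun a _ ha => by simp [hx a ha]).symm

theorem Finset.sum_ite_mem_one_mul {ι R : Type*} [DecidableEq ι] [NonAssocSemiring R]
    {s t : Finset ι} {c : ι → R} (hc : ∀ l ∉ s, c l = 0) :
    ∑ l ∈ s, (if l ∈ t then 1 else 0) * c l = ∑ l ∈ t, c l := by
  simp only [ite_mul, one_mul, zero_mul, sum_ite_mem]
  exact sum_subset inter_subset_right fun l hlt hl =>
    hc l fun hls => hl (mem_inter.2 ⟨hls, hlt⟩)

theorem Finset.sum_Icc_three {M : Type*} [AddCommMonoid M] (c : ℕ → M) (k : ℕ) :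
    ∑ l ∈ Icc k (k + 2), c l = c k + c (k + 1) + c (k + 2) := by
  rw [sum_Icc_succ_top (by omega), sum_Icc_succ_top (by omega), Icc_self, sum_singleton]

def threeTermSeq : ℕ → ℝ
  | 0 => 0
  | 1 => 1
  | k + 2 => -threeTermSeq (k + 1) - threeTermSeq k

theorem threeTermSeq_cases (k : ℕ) :
    (threeTermSeq k = 0 ∧ threeTermSeq (k + 1) = 1 ∧ k % 3 = 0) ∨
    (threeTermSeq k = 1 ∧ threeTermSeq (k + 1) = -1 ∧ k % 3 = 1) ∨
    (threeTermSeq k = -1 ∧ threeTermSeq (k + 1) = 0 ∧ k % 3 = 2) := by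
  induction k with
  | zero => simp [threeTermSeq]
  | succ k ih =>
    simp only [threeTermSeq]
    rcases ih with ⟨h0, h1, hk⟩ | ⟨h0, h1, hk⟩ | ⟨h0, h1, hk⟩ <;>
      simp only [h0, h1] <;> norm_num <;> omega

theorem eq_threeTermSeq_mul_of_sum_eq_zero {c : ℕ → ℝ} {N : ℕ} (h0 : c 0 = 0)
    (h : ∀ k, k + 2 ≤ N → c k + c (k + 1) + c (k + 2) = 0) :
    ∀ k ≤ N, c k = threeTermSeq k * c 1 := by
  intro k
  induction k using Nat.strong_induction_on with
  | _ k ih =>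
    intro hk
    match k with
    | 0 => simp [threeTermSeq, h0]
    | 1 => simp [threeTermSeq]
    | k + 2 =>
      rw [threeTermSeq]
      linarith [h k hk, ih k (by omega) (by omega), ih (k + 1) (by omega) (by omega)]

theorem eq_zero_of_sum_three_eq_zero {c : ℕ → ℝ} {t : ℝ} {d i : ℕ} (hd : d % 3 ≠ 1)
    (hi : 1 ≤ i) (hid : i + 2 ≤ d + 1) (h0 : c 0 = 0) (hend : c (d + 2) = 0)
    (hrow : ∀ k ≤ d,
      (if k + 1 = i ∨ k + 1 = i + 2 then t else 0) + (c k + c (k + 1) + c (k + 2)) = 0)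
    (hu : c i + c (i + 2) + t = 0) :
    t = 0 ∧ ∀ k ≤ d + 2, c k = 0 := by
  obtain ⟨m, rfl⟩ : ∃ m, i = m + 1 := ⟨i - 1, by omega⟩
  obtain ⟨r, rfl⟩ : ∃ r, d = m + r + 2 := ⟨d - m - 2, by omega⟩
  have hrec : ∀ k ≤ m + r + 2, k ≠ m → k ≠ m + 2 → c k + c (k + 1) + c (k + 2) = 0 := by
    intro k hk hkm hkm2
    have := hrow k hk
    rwa [if_neg (by omega), zero_add] at this
  have hleft : ∀ k ≤ m + 1, c k = threeTermSeq k * c 1 :=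
    eq_threeTermSeq_mul_of_sum_eq_zero h0 fun k hk => hrec k (by omega) (by omega) (by omega)
  have hright : ∀ s ≤ r + 1, c (m + r + 4 - s) = threeTermSeq s * c (m + r + 3) := by
    refine eq_threeTermSeq_mul_of_sum_eq_zero (c := fun s => c (m + r + 4 - s)) hend ?_
    intro s hs
    have := hrec (m + r + 2 - s) (by omega) (by omega) (by omega)
    rw [show m + r + 4 - (s + 2) = m + r + 2 - s by omega,
      show m + r + 4 - (s + 1) = m + r + 2 - s + 1 by omega,
      show m + r + 4 - s = m + r + 2 - s + 2 by omega]
    linarith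
  have hrow_m := hrow m (by omega)
  have hrow_m1 := hrec (m + 1) (by omega) (by omega) (by omega)
  have hrow_m2 := hrow (m + 2) (by omega)
  simp only [true_or, or_true, if_true] at hrow_m hrow_m2
  have hc_m := hleft m (by omega)
  have hc_m1 := hleft (m + 1) le_rfl
  have hc_m3 := hright (r + 1) le_rfl
  have hc_m4 := hright r (by omega)
  rw [show m + r + 4 - (r + 1) = m + 1 + 2 by omega] at hc_m3
  rw [show m + r + 4 - r = m + 2 + 2 by omega] at hc_m4
  have hall : c 1 = 0 ∧ c (m + r + 3) = 0 ∧ t = 0 ∧ c (m + 2) = 0 := by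
    rcases threeTermSeq_cases m with ⟨a0, a1, ha⟩ | ⟨a0, a1, ha⟩ | ⟨a0, a1, ha⟩ <;>
    rcases threeTermSeq_cases r with ⟨b0, b1, hb⟩ | ⟨b0, b1, hb⟩ | ⟨b0, b1, hb⟩ <;>
    first
    | (exfalso; omega)
    | (rw [a0] at hc_m; rw [a1] at hc_m1; rw [b1] at hc_m3; rw [b0] at hc_m4
       refine ⟨?_, ?_, ?_, ?_⟩ <;> linarith)
  refine ⟨hall.2.2.1, fun k hk => ?_⟩
  rcases Nat.lt_or_ge k (m + 2) with hkm | hkm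
  · rw [hleft k (by omega), hall.1, mul_zero]
  · rcases hkm.eq_or_lt with rfl | hkm
    · exact hall.2.2.2
    · have := hright (m + r + 4 - k) (by omega)
      rwa [Nat.sub_sub_self hk, hall.2.1, mul_zero] at this

section DiameterPath

variable {V : Type*} {G : SimpleGraph V} {d : ℕ} {v : ℕ → V}

theorem mem_pathNbrs {x : V} {k : ℕ} :
    k ∈ pathNbrs G d v x ↔ k ∈ Icc 1 (d + 1) ∧ G.Adj x (v k) :=
  mem_filter

theorem notMem_image_of_forall_ne {u : V} (huP : ∀ i ∈ Icc 1 (d + 1), u ≠ v i) :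
    u ∉ (Icc 1 (d + 1)).image v := by
  simpa only [mem_image, not_exists, not_and] using fun l hl => (huP l hl).symm

theorem adjMatrix_add_one_apply_of_pathNbrs {u : V} (huP : ∀ i ∈ Icc 1 (d + 1), u ≠ v i)
    {l : ℕ} (hl : l ∈ Icc 1 (d + 1)) :
    (G.adjMatrix ℝ + 1) u (v l) = if l ∈ pathNbrs G d v u then 1 else 0 := by
  rw [Matrix.add_apply, SimpleGraph.adjMatrix_apply, Matrix.one_apply, if_neg (huP l hl),
    add_zero]
  simp only [mem_pathNbrs, hl, true_and]

variable
  (hpath : ∀ i ∈ Icc 1 (d + 1), ∀ j ∈ Icc 1 (d + 1), G.dist (v i) (v j) = max i j - min i j)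
include hpath

theorem injOn_of_dist_eq : Set.InjOn v (Icc 1 (d + 1)) := by
  intro k hk l hl hkl
  have := hpath k hk l hl
  rw [hkl, SimpleGraph.dist_self] at this
  omega

theorem adjMatrix_add_one_apply_of_dist_eq {k l : ℕ} (hk : k + 1 ∈ Icc 1 (d + 1))
    (hl : l ∈ Icc 1 (d + 1)) :
    (G.adjMatrix ℝ + 1) (v (k + 1)) (v l) = if l ∈ Icc k (k + 2) then 1 else 0 := by
  rw [Matrix.add_apply, SimpleGraph.adjMatrix_apply, Matrix.one_apply,
    ← SimpleGraph.dist_eq_one_iff_adj, hpath _ hk _ hl, (injOn_of_dist_eq hpath).eq_iff hk hl]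
  simp only [mem_Icc]
  split_ifs <;> first | (exfalso; omega) | norm_num

theorem eq_zero_of_mem_ker_of_pathNbrs_eq [Fintype V] (hd : d % 3 ≠ 1) {u : V}
    (huP : ∀ i ∈ Icc 1 (d + 1), u ≠ v i) {i : ℕ} (hNP : pathNbrs G d v u = {i, i + 2})
    {x : V → ℝ} (hx : (G.adjMatrix ℝ + 1) *ᵥ x = 0)
    (hsupp : ∀ a ∉ insert u ((Icc 1 (d + 1)).image v), x a = 0) :
    x = 0 := by
  set c : ℕ → ℝ := fun l => if l ∈ Icc 1 (d + 1) then x (v l) else 0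
  have hc : ∀ l ∉ Icc 1 (d + 1), c l = 0 := fun l hl => if_neg hl
  have hcx : ∀ l ∈ Icc 1 (d + 1), c l = x (v l) := fun l hl => if_pos hl
  have hi := (mem_pathNbrs.1 (show i ∈ pathNbrs G d v u by simp [hNP])).1
  have hi2 := (mem_pathNbrs.1 (show i + 2 ∈ pathNbrs G d v u by simp [hNP])).1
  have hrow (z : V) : (G.adjMatrix ℝ + 1) z u * x u +
      ∑ l ∈ Icc 1 (d + 1), (G.adjMatrix ℝ + 1) z (v l) * c l = 0 := by
    calc _ = ((G.adjMatrix ℝ + 1) *ᵥ x) z := by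
          rw [(G.adjMatrix ℝ + 1).mulVec_apply_of_support_subset hsupp,
            sum_insert (notMem_image_of_forall_ne huP), sum_image (injOn_of_dist_eq hpath)]
          exact congrArg _ (sum_congr rfl fun l hl => by rw [hcx l hl])
      _ = 0 := by rw [hx, Pi.zero_apply]
  have hsymm : (G.adjMatrix ℝ + 1).IsSymm := G.isSymm_adjMatrix.add Matrix.isSymm_one
  have hpathRow (k : ℕ) (hk : k ≤ d) :
      (if k + 1 = i ∨ k + 1 = i + 2 then x u else 0) + (c k + c (k + 1) + c (k + 2)) = 0 := by
    have hk' : k + 1 ∈ Icc 1 (d + 1) := mem_Icc.2 ⟨by omega, by omega⟩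
    have h := hrow (v (k + 1))
    rw [hsymm.apply u, adjMatrix_add_one_apply_of_pathNbrs huP hk',
      sum_congr rfl fun l hl => by rw [adjMatrix_add_one_apply_of_dist_eq hpath hk' hl],
      sum_ite_mem_one_mul hc, sum_Icc_three, hNP, ite_mul, one_mul, zero_mul] at h
    simpa only [mem_insert, mem_singleton] using h
  have huRow : c i + c (i + 2) + x u = 0 := by
    have h := hrow u
    rw [Matrix.add_apply, SimpleGraph.adjMatrix_apply, Matrix.one_apply_eq,
      if_neg (G.irrefl (v := u)), zero_add, one_mul, sum_congr rfl fun l hl => by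
        rw [adjMatrix_add_one_apply_of_pathNbrs huP hl], sum_ite_mem_one_mul hc, hNP,
      sum_pair (by omega)] at h
    linarith
  rw [mem_Icc] at hi hi2
  obtain ⟨hxu, hcz⟩ := eq_zero_of_sum_three_eq_zero hd hi.1 hi2.2 (hc 0 (by simp))
    (hc (d + 2) (by simp)) hpathRow huRow
  ext a
  by_cases ha : a ∈ insert u ((Icc 1 (d + 1)).image v)
  · rcases mem_insert.1 ha with rfl | ha
    · exact hxu
    · obtain ⟨l, hl, rfl⟩ := mem_image.1 ha
      rw [← hcx l hl, hcz l (by rw [mem_Icc] at hl; omega), Pi.zero_apply]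
  · exact hsupp a ha

end DiameterPath

theorem stmt_8_general {V : Type*} [Fintype V] (G : SimpleGraph V) (n d : ℕ)
    (hcard : Fintype.card V = n)
    (hd3 : d % 3 ≠ 1)
    (v : ℕ → V)
    (hpath : ∀ i ∈ Finset.Icc 1 (d + 1), ∀ j ∈ Finset.Icc 1 (d + 1),
      G.dist (v i) (v j) = max i j - min i j)
    (hmult : multNegOne G = n - d - 1)
    (u : V) (huP : ∀ i ∈ Finset.Icc 1 (d + 1), u ≠ v i) (i j : ℕ) (hij : i < j)
    (hNP : pathNbrs G d v u = {i, j}) :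
    j = i + 1 := by
  by_contra hne
  have hi := mem_pathNbrs.1 (show i ∈ pathNbrs G d v u by simp [hNP])
  have hj := mem_pathNbrs.1 (show j ∈ pathNbrs G d v u by simp [hNP])
  have hji : j = i + 2 := by
    have h2 : G.dist (v i) (v j) ≤ 2 := G.dist_le (.cons hi.2.symm (.cons hj.2 .nil))
    rw [hpath i hi.1 j hj.1] at h2
    omega
  subst hji
  have hcard_s : #(insert u ((Icc 1 (d + 1)).image v)) = d + 2 := by
    rw [card_insert_of_notMem (notMem_image_of_forall_ne huP),
      card_image_of_injOn (injOn_of_dist_eq hpath), Nat.card_Icc]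
    omega
  have := (G.adjMatrix ℝ + 1).card_add_finrank_ker_le _ fun x hx hsupp =>
    eq_zero_of_mem_ker_of_pathNbrs_eq hpath hd3 huP hNP hx hsupp
  rw [hcard_s, hcard] at this
  unfold multNegOne at hmult
  omega

theorem stmt_8 {V : Type*} [Fintype V] (G : SimpleGraph V) (n d : ℕ)
    (hconn : G.Connected)
    (hcard : Fintype.card V = n)
    (hcanon : ∀ a b : V, (∀ z : V, (z = a ∨ G.Adj a z) ↔ (z = b ∨ G.Adj b z)) → a = b)
    (hd3 : d % 3 ≠ 1)
    (hdiam : ∀ a b : V, G.dist a b ≤ d)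
    (v : ℕ → V)
    (hpath : ∀ i ∈ Finset.Icc 1 (d + 1), ∀ j ∈ Finset.Icc 1 (d + 1),
      G.dist (v i) (v j) = max i j - min i j)
    (hmult : multNegOne G = n - d - 1)
    (u : V) (huP : ∀ i ∈ Finset.Icc 1 (d + 1), u ≠ v i) (i j : ℕ) (hij : i < j)
    (hNP : pathNbrs G d v u = {i, j}) :
    j = i + 1 :=
  stmt_8_general G n d hcard hd3 v hpath hmult u huP i j hij hNP
end

section
/- Let G be a finite simple connected C-canonical graph of order n and diameter d with d ≡ 0 (mod 3) and m_G(−1) = n − d − 1, and let P = v_1 v_2 ⋯ v_{d+1} be a diameter path of G. If a vertex x of G not on P has exactly one neighbor on P, namely v_m, then m ≡ 1 (mod 3). -/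
attribute [local instance] Classical.propDecidable

/-!
Let `A` be the adjacency matrix and `y` a vector with `(A + I) y = 0` that vanishes off the path
except possibly at `x`. Since the only path neighbours of `v_{i+1}` are `v_i` and `v_{i+2}`, its
row reads `y(v_i) + y(v_{i+1}) + y(v_{i+2}) = 0` (padding with `y(v_0) = y(v_{d+2}) = 0`) unless
`i + 1 = m`. Such sequences are `3`-periodic, so for `d ≡ 0 (mod 3)` a kernel vector vanishing off
the path is zero; the kernel has dimension `n - d - 1`, so restriction to the vertices off the path
is a bijection. Take the kernel vector that is `1` at `x` and `0` at the other vertices off the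
path. The row at `x` gives `y(v_m) = -1`; running the recurrence forward from `v_0` shows
`m ≢ 0`, and backward from `v_{d+2}` shows `m ≢ d + 2 ≡ 2 (mod 3)`.
-/

open Finset Matrix

section ThreeTerm

variable {R : Type*} [AddCommGroup R] (z : ℕ → R)

lemma eq_add_three_mul_of_three_term {a b : ℕ}
    (hrec : ∀ i, a ≤ i → i + 2 ≤ b → z i + z (i + 1) + z (i + 2) = 0) :
    ∀ t, a + 3 * t ≤ b → z (a + 3 * t) = z a := by
  intro t
  induction t with
  | zero => simp
  | succ t ih =>
    intro ht
    have h₁ := hrec (a + 3 * t) (by omega) (by omega)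
    have h₂ := hrec (a + 3 * t + 1) (by omega) (by omega)
    rw [← ih (by omega), ← sub_eq_zero]
    calc z (a + 3 * (t + 1)) - z (a + 3 * t)
        = (z (a + 3 * t + 1) + z (a + 3 * t + 1 + 1) + z (a + 3 * t + 1 + 2))
          - (z (a + 3 * t) + z (a + 3 * t + 1) + z (a + 3 * t + 2)) := by
          rw [show a + 3 * t + 1 + 1 = a + 3 * t + 2 by omega,
            show a + 3 * t + 1 + 2 = a + 3 * (t + 1) by omega]
          abel
      _ = 0 := by rw [h₁, h₂, sub_zero]

variable {z}

lemma mod_three_eq_one_of_three_term {d m : ℕ} (hd : d % 3 = 0) (hm : m ≤ d + 2)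
    (h₀ : z 0 = 0) (htop : z (d + 2) = 0)
    (hrec : ∀ i ≤ d, i + 1 ≠ m → z i + z (i + 1) + z (i + 2) = 0) (hzm : z m ≠ 0) :
    m % 3 = 1 := by
  by_contra hm1
  rcases (by omega : m % 3 = 0 ∨ m % 3 = 2) with h | h
  · have := eq_add_three_mul_of_three_term z (a := 0) (b := m)
      (fun i _ hi => hrec i (by omega) (by omega)) (m / 3) (by omega)
    rw [show 0 + 3 * (m / 3) = m by omega, h₀] at this
    exact hzm this
  · have := eq_add_three_mul_of_three_term z (a := m) (b := d + 2)
      (fun i hi _ => hrec i (by omega) (by omega)) ((d + 2 - m) / 3) (by omega)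
    rw [show m + 3 * ((d + 2 - m) / 3) = d + 2 by omega, htop] at this
    exact hzm this.symm

lemma eq_zero_of_three_term {d : ℕ} (hd : d % 3 = 0) (h₀ : z 0 = 0) (htop : z (d + 2) = 0)
    (hrec : ∀ i ≤ d, z i + z (i + 1) + z (i + 2) = 0) {j : ℕ} (hj : j ≤ d + 2) : z j = 0 := by
  have mod_three {k : ℕ} (hk : k ≤ d + 2) (hz : z k ≠ 0) : k % 3 = 1 :=
    mod_three_eq_one_of_three_term hd hk h₀ htop (fun i hi _ => hrec i hi) hz
  by_contra hzj
  have hj1 := mod_three hj hzj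
  obtain ⟨i, rfl⟩ : ∃ i, j = i + 1 := ⟨j - 1, by omega⟩
  have hzi : z i = 0 := by_contra fun h => by have := mod_three (by omega) h; omega
  have hzi2 : z (i + 2) = 0 := by_contra fun h => by have := mod_three (by omega) h; omega
  have := hrec i (by omega)
  rw [hzi, hzi2, zero_add, add_zero] at this
  exact hzj this

end ThreeTerm

lemma Matrix.mulVec_apply_eq_sum_of_eq_zero {ι κ R : Type*} [Fintype κ]
    [NonUnitalNonAssocSemiring R] (M : Matrix ι κ R) {y : κ → R} {s : Finset κ}
    (hy : ∀ w ∉ s, y w = 0) (u : ι) :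
    (M *ᵥ y) u = ∑ w ∈ s, M u w * y w := by
  rw [Matrix.mulVec, dotProduct]
  refine (sum_subset (subset_univ s) fun w _ hw => ?_).symm
  rw [hy w hw, mul_zero]

lemma exists_mem_eq_on_compl_of_finrank_eq {K ι : Type*} [Field K] [Fintype ι]
    (W : Submodule K (ι → K)) (s : Finset ι) (hW : ∀ y ∈ W, (∀ w ∉ s, y w = 0) → y = 0)
    (hdim : Module.finrank K W = sᶜ.card) (g : ι → K) :
    ∃ y ∈ W, ∀ w ∉ s, y w = g w := by
  let π : W →ₗ[K] ((sᶜ : Finset ι) → K) :=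
    (LinearMap.funLeft K K Subtype.val).comp W.subtype
  have hπ : Function.Injective π := by
    rw [← LinearMap.ker_eq_bot, LinearMap.ker_eq_bot']
    intro y hy
    refine Subtype.ext (hW y y.2 fun w hw => ?_)
    exact congrFun hy ⟨w, mem_compl.mpr hw⟩
  obtain ⟨y, hy⟩ := (LinearMap.injective_iff_surjective_of_finrank_eq_finrank
    (by simp [hdim, card_compl])).mp hπ fun w => g w
  exact ⟨y, y.2, fun w hw => congrFun hy ⟨w, mem_compl.mpr hw⟩⟩

lemma SimpleGraph.adjMatrix_add_one_apply_s10 {V R : Type*} [NonAssocSemiring R] (G : SimpleGraph V)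
    (a b : V) : (G.adjMatrix R + 1) a b = if G.Adj a b ∨ a = b then 1 else 0 := by
  by_cases h : a = b
  · subst h; simp
  · simp [h]

section Path

variable {V : Type*} {G : SimpleGraph V} {d : ℕ} {v : ℕ → V}

def IsGeodesicSeq (G : SimpleGraph V) (d : ℕ) (v : ℕ → V) : Prop :=
  ∀ i ∈ Icc 1 (d + 1), ∀ j ∈ Icc 1 (d + 1), G.dist (v i) (v j) = max i j - min i j

noncomputable def pathSet (d : ℕ) (v : ℕ → V) : Finset V := (Icc 1 (d + 1)).image v

noncomputable def alongPath (d : ℕ) (v : ℕ → V) (y : V → ℝ) (k : ℕ) : ℝ :=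
  if k ∈ Icc 1 (d + 1) then y (v k) else 0

lemma alongPath_zero (y : V → ℝ) : alongPath d v y 0 = 0 := by
  simp [alongPath]

lemma alongPath_add_two (y : V → ℝ) : alongPath d v y (d + 2) = 0 := by
  simp [alongPath]

lemma sum_ite_mem_alongPath (y : V → ℝ) (t : Finset ℕ) :
    ∑ k ∈ Icc 1 (d + 1), (if k ∈ t then y (v k) else 0) = ∑ k ∈ t, alongPath d v y k := by
  simp only [alongPath, sum_ite_mem, inter_comm]

lemma notMem_pathSet {x : V} (hxP : ∀ i ∈ Icc 1 (d + 1), x ≠ v i) : x ∉ pathSet d v := by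
  rw [pathSet, mem_image, not_exists]
  exact fun i ⟨hi, hxi⟩ => hxP i hi hxi.symm

lemma mem_Icc_of_pathNbrs_eq_singleton {x : V} {m : ℕ} (hNP : pathNbrs G d v x = {m}) :
    m ∈ Icc 1 (d + 1) :=
  (mem_filter.mp (hNP ▸ mem_singleton_self m)).1

lemma adj_iff_of_pathNbrs_eq_singleton {x : V} {m : ℕ} (hNP : pathNbrs G d v x = {m}) {k : ℕ}
    (hk : k ∈ Icc 1 (d + 1)) : G.Adj x (v k) ↔ k = m := by
  rw [← mem_singleton, ← hNP, pathNbrs, mem_filter, and_iff_right hk]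

lemma IsGeodesicSeq.injOn (hv : IsGeodesicSeq G d v) : Set.InjOn v (Icc 1 (d + 1) : Set ℕ) := by
  intro i hi j hj hij
  have := hv i hi j hj
  rw [hij, SimpleGraph.dist_self] at this
  omega

lemma IsGeodesicSeq.card_pathSet (hv : IsGeodesicSeq G d v) : (pathSet d v).card = d + 1 := by
  rw [pathSet, card_image_of_injOn hv.injOn, Nat.card_Icc, Nat.add_sub_cancel]

lemma IsGeodesicSeq.adj_or_eq_iff (hv : IsGeodesicSeq G d v) {j k : ℕ} (hj : j ∈ Icc 1 (d + 1))
    (hk : k ∈ Icc 1 (d + 1)) : G.Adj (v j) (v k) ∨ v j = v k ↔ k ∈ Icc (j - 1) (j + 1) := by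
  have hjk := hv j hj k hk
  rw [mem_Icc] at hj hk ⊢
  constructor
  · rintro (h | h)
    · rw [← SimpleGraph.dist_eq_one_iff_adj, hjk] at h
      omega
    · rw [h, SimpleGraph.dist_self] at hjk
      omega
  · intro h
    by_cases hjk' : j = k
    · exact Or.inr (congrArg v hjk')
    · left
      rw [← SimpleGraph.dist_eq_one_iff_adj, hjk]
      omega

lemma IsGeodesicSeq.sum_pathSet_adjMatrix_add_one (hv : IsGeodesicSeq G d v) (y : V → ℝ)
    {i : ℕ} (hi : i ≤ d) :
    ∑ w ∈ pathSet d v, (G.adjMatrix ℝ + 1) (v (i + 1)) w * y w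
      = alongPath d v y i + alongPath d v y (i + 1) + alongPath d v y (i + 2) := by
  have hi1 : i + 1 ∈ Icc 1 (d + 1) := mem_Icc.mpr ⟨by omega, by omega⟩
  rw [pathSet, sum_image hv.injOn]
  calc ∑ k ∈ Icc 1 (d + 1), (G.adjMatrix ℝ + 1) (v (i + 1)) (v k) * y (v k)
      = ∑ k ∈ Icc 1 (d + 1), if k ∈ Icc i (i + 2) then y (v k) else 0 := by
        refine sum_congr rfl fun k hk => ?_
        rw [G.adjMatrix_add_one_apply_s10, if_congr (hv.adj_or_eq_iff hi1 hk) rfl rfl, ite_mul,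
          one_mul, zero_mul]
        rfl
    _ = _ := by
        rw [sum_ite_mem_alongPath, sum_Icc_succ_top (by omega), sum_Icc_succ_top (by omega),
          Icc_self, sum_singleton]

lemma IsGeodesicSeq.sum_pathSet_adjMatrix_add_one_of_pathNbrs_eq_singleton
    (hv : IsGeodesicSeq G d v) {x : V} (hxP : ∀ i ∈ Icc 1 (d + 1), x ≠ v i) {m : ℕ}
    (hNP : pathNbrs G d v x = {m}) (y : V → ℝ) :
    ∑ w ∈ pathSet d v, (G.adjMatrix ℝ + 1) x w * y w = alongPath d v y m := by
  rw [pathSet, sum_image hv.injOn, ← sum_singleton (alongPath d v y) m,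
    ← sum_ite_mem_alongPath]
  refine sum_congr rfl fun k hk => ?_
  rw [G.adjMatrix_add_one_apply_s10, ite_mul, one_mul, zero_mul]
  refine if_congr ?_ rfl rfl
  rw [or_iff_left (hxP k hk), adj_iff_of_pathNbrs_eq_singleton hNP hk, mem_singleton]

lemma IsGeodesicSeq.eq_zero_of_mulVec_eq_zero [Fintype V] (hv : IsGeodesicSeq G d v)
    (hd : d % 3 = 0) {y : V → ℝ} (hy : (G.adjMatrix ℝ + 1) *ᵥ y = 0)
    (hsupp : ∀ w ∉ pathSet d v, y w = 0) : y = 0 := by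
  have hz {j : ℕ} (hj : j ≤ d + 2) : alongPath d v y j = 0 := by
    refine eq_zero_of_three_term hd (alongPath_zero y) (alongPath_add_two y) (fun i hi => ?_) hj
    rw [← hv.sum_pathSet_adjMatrix_add_one y hi, ← mulVec_apply_eq_sum_of_eq_zero _ hsupp, hy,
      Pi.zero_apply]
  funext w
  by_cases hw : w ∈ pathSet d v
  · obtain ⟨k, hk, rfl⟩ := mem_image.mp hw
    have := hz (j := k) (by rw [mem_Icc] at hk; omega)
    rwa [alongPath, if_pos hk] at this
  · exact hsupp w hw

lemma IsGeodesicSeq.exists_mulVec_eq_zero_eq_on_compl [Fintype V] (hv : IsGeodesicSeq G d v)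
    (hd : d % 3 = 0) (hmult : multNegOne G = Fintype.card V - (d + 1)) (g : V → ℝ) :
    ∃ y, (G.adjMatrix ℝ + 1) *ᵥ y = 0 ∧ ∀ w ∉ pathSet d v, y w = g w := by
  have hker {y : V → ℝ} : y ∈ LinearMap.ker (toLin' (G.adjMatrix ℝ + 1)) ↔
      (G.adjMatrix ℝ + 1) *ᵥ y = 0 := by
    rw [LinearMap.mem_ker, toLin'_apply]
  obtain ⟨y, hyK, hy⟩ := exists_mem_eq_on_compl_of_finrank_eq _ (pathSet d v)
    (fun y hyK => hv.eq_zero_of_mulVec_eq_zero hd (hker.mp hyK))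
    (by rw [← multNegOne, hmult, card_compl, hv.card_pathSet]) g
  exact ⟨y, hker.mp hyK, hy⟩

end Path

theorem stmt_10_general {V : Type*} [Fintype V] (G : SimpleGraph V) (n d : ℕ)
    (hcard : Fintype.card V = n)
    (hd3 : d % 3 = 0)
    (v : ℕ → V)
    (hpath : ∀ i ∈ Finset.Icc 1 (d + 1), ∀ j ∈ Finset.Icc 1 (d + 1),
      G.dist (v i) (v j) = max i j - min i j)
    (hmult : multNegOne G = n - d - 1)
    (x : V) (hxP : ∀ i ∈ Finset.Icc 1 (d + 1), x ≠ v i) (m : ℕ) (hNP : pathNbrs G d v x = {m}) :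
    m % 3 = 1 := by
  have hv : IsGeodesicSeq G d v := hpath
  have hx := notMem_pathSet hxP
  have hm := mem_Icc_of_pathNbrs_eq_singleton hNP
  obtain ⟨y, hyK, hy⟩ := hv.exists_mulVec_eq_zero_eq_on_compl hd3 (by omega) (Pi.single x 1)
  have hrow (u : V) :
      (G.adjMatrix ℝ + 1) u x * y x + ∑ w ∈ pathSet d v, (G.adjMatrix ℝ + 1) u w * y w = 0 := by
    have hsupp (w : V) (hw : w ∉ insert x (pathSet d v)) : y w = 0 := by
      rw [mem_insert, not_or] at hw
      rw [hy w hw.2, Pi.single_eq_of_ne hw.1]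
    have := mulVec_apply_eq_sum_of_eq_zero (G.adjMatrix ℝ + 1) hsupp u
    rwa [hyK, Pi.zero_apply, sum_insert hx, eq_comm] at this
  refine mod_three_eq_one_of_three_term (z := alongPath d v y) hd3 (by rw [mem_Icc] at hm; omega)
    (alongPath_zero y) (alongPath_add_two y) (fun i hi him => ?_) ?_
  · have hi1 : i + 1 ∈ Icc 1 (d + 1) := mem_Icc.mpr ⟨by omega, by omega⟩
    have := hrow (v (i + 1))
    rwa [hv.sum_pathSet_adjMatrix_add_one y hi, G.adjMatrix_add_one_apply_s10, if_neg, zero_mul,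
      zero_add] at this
    rw [G.adj_comm, adj_iff_of_pathNbrs_eq_singleton hNP hi1, eq_comm (a := v (i + 1))]
    exact not_or.mpr ⟨him, hxP (i + 1) hi1⟩
  · have := hrow x
    rw [hv.sum_pathSet_adjMatrix_add_one_of_pathNbrs_eq_singleton hxP hNP,
      G.adjMatrix_add_one_apply_s10, if_pos (Or.inr rfl), hy x hx, Pi.single_eq_same] at this
    linarith

theorem stmt_10 {V : Type*} [Fintype V] (G : SimpleGraph V) (n d : ℕ)
    (hconn : G.Connected)
    (hcard : Fintype.card V = n)
    (hcanon : ∀ a b : V, (∀ z : V, (z = a ∨ G.Adj a z) ↔ (z = b ∨ G.Adj b z)) → a = b)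
    (hd3 : d % 3 = 0)
    (hdiam : ∀ a b : V, G.dist a b ≤ d)
    (v : ℕ → V)
    (hpath : ∀ i ∈ Finset.Icc 1 (d + 1), ∀ j ∈ Finset.Icc 1 (d + 1),
      G.dist (v i) (v j) = max i j - min i j)
    (hmult : multNegOne G = n - d - 1)
    (x : V) (hxP : ∀ i ∈ Finset.Icc 1 (d + 1), x ≠ v i) (m : ℕ) (hNP : pathNbrs G d v x = {m}) :
    m % 3 = 1 :=
  stmt_10_general G n d hcard hd3 v hpath hmult x hxP m hNP
end

section
/- Let G be a finite simple connected C-canonical graph of order n and diameter d with d ≡ 0 (mod 3) and m_G(−1) = n − d − 1, and let P = v_1 v_2 ⋯ v_{d+1} be a diameter path of G. If a vertex u of G not on P is adjacent to exactly the two consecutive vertices v_m and v_{m+1} of P, then m ≡ 0 (mod 3) or m ≡ 1 (mod 3). -/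
attribute [local instance] Classical.propDecidable

/-!
Let `S` be the vertex set of the path and `K = ker (A + I)`. For `y ∈ K`, the equation at a path
vertex `v (i + 1)` says that three consecutive values of `y` along the path, extended by
`0` at the indices `0` and `d + 2`, sum to minus the contribution of the off-path neighbours.
If `y` vanishes off `S`, the values are therefore `3`-periodic, and `d ≡ 0 (mod 3)` forces
them to vanish. So restricting `K` to `V \ S` is injective, hence bijective since
`dim K = n - d - 1 = |V \ S|`, and some `y ∈ K` is the indicator of `u` off `S`. For this `y`
only the equations at `v m` and `v (m + 1)` are perturbed (by `y u = 1`), and the equation at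
`u` reads `1 + y (v m) + y (v (m + 1)) = 0`. If `m ≡ 2 (mod 3)`, the unperturbed stretches on
both sides of the edge `v m v (m + 1)` force `y (v m) = y (v (m + 1)) = 0`, a contradiction.
-/

section ThreeTermRecurrence

variable {R : Type*} [CommRing R]

theorem apply_eq_apply_mod_three {a : ℕ → R} {N : ℕ}
    (h : ∀ i < N, a i + a (i + 1) + a (i + 2) = 0) : ∀ i ≤ N + 1, a i = a (i % 3)
  | 0, _ | 1, _ | 2, _ => rfl
  | k + 3, hk => by
    rw [Nat.add_mod_right, ← apply_eq_apply_mod_three h k (by omega)]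
    linear_combination h (k + 1) (by omega) - h k (by omega)

theorem apply_succ_eq_zero_of_triple_sum {a : ℕ → R} {N : ℕ} (hN : N % 3 = 1)
    (h0 : a 0 = 0) (hN0 : a N = 0) (h : ∀ i < N, a i + a (i + 1) + a (i + 2) = 0) :
    a (N + 1) = 0 := by
  have hp := apply_eq_apply_mod_three h
  have h1 : a 1 = 0 := by rw [← hN, ← hp N (by omega), hN0]
  rw [hp (N + 1) le_rfl, show (N + 1) % 3 = 2 by omega]
  linear_combination h 0 (by omega) - h0 - h1

theorem eq_zero_of_triple_sum {a : ℕ → R} {d : ℕ} (hd : d % 3 = 0) (h0 : a 0 = 0)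
    (hd2 : a (d + 2) = 0) (h : ∀ i ≤ d, a i + a (i + 1) + a (i + 2) = 0) :
    ∀ i ≤ d + 2, a i = 0 := by
  have hp := apply_eq_apply_mod_three (N := d + 1) fun i hi => h i (by omega)
  have h2 : a 2 = 0 := by rw [← hd2, hp (d + 2) le_rfl, show (d + 2) % 3 = 2 by omega]
  have h1 : a 1 = 0 := by linear_combination h 0 (by omega) - h0 - h2
  intro i hi
  rw [hp i hi]
  obtain hi | hi | hi : i % 3 = 0 ∨ i % 3 = 1 ∨ i % 3 = 2 := (by omega) <;> rw [hi] <;> assumption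

theorem eq_zero_of_triple_sum_perturbed {a : ℕ → R} {d m : ℕ} {c : R} (hd : d % 3 = 0)
    (hm : m % 3 = 2) (hmd : m + 1 ≤ d + 1) (h0 : a 0 = 0) (hd2 : a (d + 2) = 0)
    (h : ∀ i ≤ d, a i + a (i + 1) + a (i + 2) + (if i + 1 = m ∨ i + 1 = m + 1 then c else 0) = 0)
    (hc : c + a m + a (m + 1) = 0) : c = 0 := by
  obtain ⟨k, rfl⟩ : ∃ k, m = k + 2 := ⟨m - 2, by omega⟩
  have hl : a (k + 1) = 0 := by
    have := h (k + 1) (by omega)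
    rw [if_pos (by omega)] at this
    linear_combination this - hc
  have hr : a (k + 4) = 0 := by
    have := h (k + 2) (by omega)
    rw [if_pos (by omega)] at this
    linear_combination this - hc
  have hunperturbed : ∀ i ≤ d, i ≠ k + 1 → i ≠ k + 2 → a i + a (i + 1) + a (i + 2) = 0 := by
    intro i hi hi1 hi2
    simpa only [if_neg (show ¬(i + 1 = k + 2 ∨ i + 1 = k + 2 + 1) by omega), add_zero] using h i hi
  have hleft : a (k + 2) = 0 :=
    apply_succ_eq_zero_of_triple_sum (N := k + 1) (by omega) h0 hl
      fun i hi => hunperturbed i (by omega) (by omega) (by omega)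
  have hright : a (d + 2 - (d - (k + 2) + 1)) = 0 := by
    refine apply_succ_eq_zero_of_triple_sum (a := fun j => a (d + 2 - j)) (by omega)
      (by simpa using hd2) (by rwa [show d + 2 - (d - (k + 2)) = k + 4 by omega]) fun j hj => ?_
    have := hunperturbed (d - j) (by omega) (by omega) (by omega)
    rw [show d + 2 - j = d - j + 2 by omega, show d + 2 - (j + 1) = d - j + 1 by omega,
      show d + 2 - (j + 2) = d - j by omega]
    linear_combination this
  rw [show d + 2 - (d - (k + 2) + 1) = k + 2 + 1 by omega] at hright
  linear_combination hc - hleft - hright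

end ThreeTermRecurrence

theorem Submodule.exists_mem_eqOn_compl {K V : Type*} [Field K] [Fintype V]
    {W : Submodule K (V → K)} {S : Finset V} (hinj : ∀ y ∈ W, (∀ w ∉ S, y w = 0) → y = 0)
    (hdim : Module.finrank K W = Fintype.card V - S.card) (f : V → K) :
    ∃ y ∈ W, ∀ w ∉ S, y w = f w := by
  let restrict : W →ₗ[K] ({w // w ∉ S} → K) :=
    (LinearMap.funLeft K K Subtype.val).comp W.subtype
  have hrestrict : Function.Injective restrict := by
    rw [injective_iff_map_eq_zero]
    rintro ⟨y, hy⟩ h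
    exact Subtype.ext (hinj y hy fun w hw => congrFun h ⟨w, hw⟩)
  obtain ⟨⟨y, hy⟩, hyf⟩ := (LinearMap.injective_iff_surjective_of_finrank_eq_finrank
    (by simp [hdim, Fintype.card_subtype_compl])).mp hrestrict fun w => f w
  exact ⟨y, hy, fun w hw => congrFun hyf ⟨w, hw⟩⟩

theorem SimpleGraph.mem_ker_toLin'_adjMatrix_add_one {V R : Type*} [Fintype V] [CommRing R]
    (G : SimpleGraph V) {y : V → R} :
    y ∈ LinearMap.ker (Matrix.toLin' (G.adjMatrix R + 1)) ↔
      ∀ w, y w + ∑ z ∈ G.neighborFinset w, y z = 0 := by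
  simp [funext_iff, add_comm]

section GeodesicPath

variable {V R : Type*} {G : SimpleGraph V} {d : ℕ} {v : ℕ → V}

def IsGeodesicPath (G : SimpleGraph V) (d : ℕ) (v : ℕ → V) : Prop :=
  ∀ i ∈ Finset.Icc 1 (d + 1), ∀ j ∈ Finset.Icc 1 (d + 1), G.dist (v i) (v j) = max i j - min i j

noncomputable def pathFinset (d : ℕ) (v : ℕ → V) : Finset V :=
  (Finset.Icc 1 (d + 1)).image v

noncomputable def offPathNbrs [Fintype V] (G : SimpleGraph V) (d : ℕ) (v : ℕ → V) (x : V) :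
    Finset V :=
  (G.neighborFinset x).filter (· ∉ pathFinset d v)

theorem mem_offPathNbrs [Fintype V] {x z : V} :
    z ∈ offPathNbrs G d v x ↔ G.Adj x z ∧ z ∉ pathFinset d v := by
  rw [offPathNbrs, Finset.mem_filter, SimpleGraph.mem_neighborFinset]

theorem pathNbrs_subset (x : V) : pathNbrs G d v x ⊆ Finset.Icc 1 (d + 1) :=
  Finset.filter_subset _ _

/-- The values of `y` along the path, extended by `0` at the indices `0` and `d + 2`, so that
the eigenvalue equation at every path vertex involves three consecutive values. -/
noncomputable def pathValues [Zero R] (d : ℕ) (v : ℕ → V) (y : V → R) (i : ℕ) : R :=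
  if i ∈ Finset.Icc 1 (d + 1) then y (v i) else 0

@[simp]
theorem pathValues_zero [Zero R] (y : V → R) : pathValues d v y 0 = 0 := by
  simp [pathValues]

@[simp]
theorem pathValues_add_two [Zero R] (y : V → R) : pathValues d v y (d + 2) = 0 := by
  simp [pathValues]

theorem pathValues_of_mem [Zero R] (y : V → R) {i : ℕ} (hi : i ∈ Finset.Icc 1 (d + 1)) :
    pathValues d v y i = y (v i) :=
  if_pos hi

theorem sum_neighborFinset_eq_pathNbrs_add_offPathNbrs [Fintype V] [AddCommMonoid R]
    (hinj : Set.InjOn v (Finset.Icc 1 (d + 1))) (y : V → R) (x : V) :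
    ∑ z ∈ G.neighborFinset x, y z =
      ∑ i ∈ pathNbrs G d v x, y (v i) + ∑ z ∈ offPathNbrs G d v x, y z := by
  rw [← Finset.sum_filter_add_sum_filter_not (G.neighborFinset x) (· ∈ pathFinset d v)]
  have himage : (G.neighborFinset x).filter (· ∈ pathFinset d v) = (pathNbrs G d v x).image v := by
    ext z
    simp only [Finset.mem_filter, Finset.mem_image, SimpleGraph.mem_neighborFinset, pathFinset,
      pathNbrs]
    grind
  rw [himage, Finset.sum_image (hinj.mono (Finset.coe_subset.mpr (pathNbrs_subset x))),
    offPathNbrs]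

namespace IsGeodesicPath

variable (hv : IsGeodesicPath G d v)
include hv

theorem injOn : Set.InjOn v (Finset.Icc 1 (d + 1)) := by
  intro i hi j hj hij
  have := hv i hi j hj
  rw [hij, SimpleGraph.dist_self] at this
  omega

theorem adj_iff {i j : ℕ} (hi : i ∈ Finset.Icc 1 (d + 1)) (hj : j ∈ Finset.Icc 1 (d + 1)) :
    G.Adj (v i) (v j) ↔ i + 1 = j ∨ j + 1 = i := by
  rw [← SimpleGraph.dist_eq_one_iff_adj, hv i hi j hj]
  omega

theorem card_pathFinset : (pathFinset d v).card = d + 1 := by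
  rw [pathFinset, Finset.card_image_of_injOn hv.injOn, Nat.card_Icc, Nat.add_sub_cancel]

theorem sum_pathNbrs_succ [AddCommMonoid R] (y : V → R) {i : ℕ} (hi : i ≤ d) :
    ∑ j ∈ pathNbrs G d v (v (i + 1)), y (v j) = pathValues d v y i + pathValues d v y (i + 2) := by
  have hi₁ : i + 1 ∈ Finset.Icc 1 (d + 1) := by simp only [Finset.mem_Icc]; omega
  calc ∑ j ∈ pathNbrs G d v (v (i + 1)), y (v j)
      = ∑ j ∈ Finset.Icc 1 (d + 1),
          ((if i = j then y (v j) else 0) + (if i + 2 = j then y (v j) else 0)) := by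
        rw [pathNbrs, Finset.sum_filter]
        refine Finset.sum_congr rfl fun j hj => ?_
        rw [hv.adj_iff hi₁ hj]
        split_ifs <;> first | omega | simp
    _ = pathValues d v y i + pathValues d v y (i + 2) := by
        rw [Finset.sum_add_distrib, Finset.sum_ite_eq, Finset.sum_ite_eq]
        rfl

theorem triple_add_sum_offPathNbrs_eq_zero [Fintype V] [CommRing R] {y : V → R}
    (hy : y ∈ LinearMap.ker (Matrix.toLin' (G.adjMatrix R + 1))) {i : ℕ} (hi : i ≤ d) :
    pathValues d v y i + pathValues d v y (i + 1) + pathValues d v y (i + 2) +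
      ∑ z ∈ offPathNbrs G d v (v (i + 1)), y z = 0 := by
  have := G.mem_ker_toLin'_adjMatrix_add_one.mp hy (v (i + 1))
  rw [sum_neighborFinset_eq_pathNbrs_add_offPathNbrs hv.injOn, hv.sum_pathNbrs_succ y hi]
    at this
  rw [pathValues_of_mem (i := i + 1) y (by simp only [Finset.mem_Icc]; omega)]
  linear_combination this

theorem eq_zero_of_mem_ker [Fintype V] [CommRing R] (hd : d % 3 = 0) {y : V → R}
    (hy : y ∈ LinearMap.ker (Matrix.toLin' (G.adjMatrix R + 1)))
    (hoff : ∀ w ∉ pathFinset d v, y w = 0) : y = 0 := by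
  have hvals := eq_zero_of_triple_sum hd (pathValues_zero y) (pathValues_add_two y) fun i hi => by
    have := hv.triple_add_sum_offPathNbrs_eq_zero hy hi
    rwa [Finset.sum_eq_zero fun z hz => hoff z (mem_offPathNbrs.mp hz).2, add_zero] at this
  funext w
  by_cases hw : w ∈ pathFinset d v
  · obtain ⟨i, hi, rfl⟩ := Finset.mem_image.mp hw
    rw [← pathValues_of_mem y hi]
    exact hvals i (by simp only [Finset.mem_Icc] at hi; omega)
  · exact hoff w hw

end IsGeodesicPath

end GeodesicPath

theorem stmt_12_general {V : Type*} [Fintype V] (G : SimpleGraph V) (n d : ℕ)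
    (hcard : Fintype.card V = n)
    (hd3 : d % 3 = 0)
    (v : ℕ → V)
    (hpath : ∀ i ∈ Finset.Icc 1 (d + 1), ∀ j ∈ Finset.Icc 1 (d + 1),
      G.dist (v i) (v j) = max i j - min i j)
    (hmult : multNegOne G = n - d - 1)
    (u : V) (huP : ∀ i ∈ Finset.Icc 1 (d + 1), u ≠ v i) (m : ℕ) (hNP : pathNbrs G d v u = {m, m + 1}) :
    m % 3 = 0 ∨ m % 3 = 1 := by
  have hv : IsGeodesicPath G d v := hpath
  have hu : u ∉ pathFinset d v := by simpa [pathFinset, eq_comm] using huP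
  have hnbr : ∀ i ∈ Finset.Icc 1 (d + 1), G.Adj u (v i) ↔ i = m ∨ i = m + 1 := fun i hi => by
    simpa [pathNbrs, hi] using Finset.ext_iff.mp hNP i
  have hm : m ∈ Finset.Icc 1 (d + 1) ∧ m + 1 ∈ Finset.Icc 1 (d + 1) := by
    simpa [Finset.insert_subset_iff, hNP] using pathNbrs_subset (G := G) (d := d) (v := v) u
  obtain ⟨y, hyK, hy⟩ := Submodule.exists_mem_eqOn_compl (fun y hy => hv.eq_zero_of_mem_ker hd3 hy)
    (by rw [← multNegOne, hmult, hv.card_pathFinset, hcard]; omega)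
    fun w => if w = u then (1 : ℝ) else 0
  have hoff : ∀ x, ∑ z ∈ offPathNbrs G d v x, y z = if G.Adj x u then 1 else 0 := fun x => by
    rw [Finset.sum_congr rfl fun z hz => hy z (mem_offPathNbrs.mp hz).2, Finset.sum_ite_eq']
    simp [mem_offPathNbrs, hu]
  by_contra hcon
  refine one_ne_zero (eq_zero_of_triple_sum_perturbed (a := pathValues d v y) (m := m) hd3
    (by omega) (Finset.mem_Icc.mp hm.2).2 (pathValues_zero y) (pathValues_add_two y)
    (fun i hi => ?_) ?_)
  · have hi₁ : i + 1 ∈ Finset.Icc 1 (d + 1) := by simp only [Finset.mem_Icc]; omega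
    rw [← if_congr ((G.adj_comm _ _).trans (hnbr _ hi₁)) rfl rfl, ← hoff]
    exact hv.triple_add_sum_offPathNbrs_eq_zero hyK hi
  · have := G.mem_ker_toLin'_adjMatrix_add_one.mp hyK u
    rw [sum_neighborFinset_eq_pathNbrs_add_offPathNbrs hv.injOn, hoff, hNP,
      Finset.sum_pair (by omega), hy u hu] at this
    simpa [pathValues_of_mem y hm.1, pathValues_of_mem y hm.2, add_assoc] using this

theorem stmt_12 {V : Type*} [Fintype V] (G : SimpleGraph V) (n d : ℕ)
    (hconn : G.Connected)
    (hcard : Fintype.card V = n)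
    (hcanon : ∀ a b : V, (∀ z : V, (z = a ∨ G.Adj a z) ↔ (z = b ∨ G.Adj b z)) → a = b)
    (hd3 : d % 3 = 0)
    (hdiam : ∀ a b : V, G.dist a b ≤ d)
    (v : ℕ → V)
    (hpath : ∀ i ∈ Finset.Icc 1 (d + 1), ∀ j ∈ Finset.Icc 1 (d + 1),
      G.dist (v i) (v j) = max i j - min i j)
    (hmult : multNegOne G = n - d - 1)
    (u : V) (huP : ∀ i ∈ Finset.Icc 1 (d + 1), u ≠ v i) (m : ℕ) (hNP : pathNbrs G d v u = {m, m + 1}) :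
    m % 3 = 0 ∨ m % 3 = 1 :=
  stmt_12_general G n d hcard hd3 v hpath hmult u huP m hNP
end
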